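/- Let m > 1 be an integer. The map h/k ↦ (k−2h)/(k−h) is an order-reversing bijection from F^{≤1/2}(B(2m),m) onto the Farey sequence F_m, and the map h/k ↦ (k−h)/(2k−h) is its inverse, an order-reversing bijection from F_m onto F^{≤1/2}(B(2m),m). (Here h/k denotes a fraction in lowest terms.) -/
import Mathlib

/-- The Farey sequence `F_n` of order `n`, viewed as the set of rationals `q`
with `0 ≤ q ≤ 1` whose lowest-terms denominator is at most `n`. -/
def Farey (n : ℕ) : Set ℚ :=
  {q : ℚ | 0 ≤ q ∧ q ≤ 1 ∧ q.den ≤ n}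

/-- The Farey subsequence `F(B(n),m)`: fractions `h/k ∈ F_n` in lowest terms
with `h ≤ m` and `k - h ≤ n - m`. -/
def FareyB (n m : ℕ) : Set ℚ :=
  {q : ℚ | 0 ≤ q ∧ q ≤ 1 ∧ q.den ≤ n ∧ q.num ≤ (m : ℤ) ∧
    (q.den : ℤ) - q.num ≤ (n : ℤ) - (m : ℤ)}

/-- `f'` is the predecessor of `f` in the set `S` of rationals. -/
def IsPredIn (S : Set ℚ) (f' f : ℚ) : Prop :=
  f' ∈ S ∧ f ∈ S ∧ f' < f ∧ ∀ g ∈ S, ¬(f' < g ∧ g < f)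

/-- `f'` is the successor of `f` in the set `S` of rationals. -/
def IsSuccIn (S : Set ℚ) (f f' : ℚ) : Prop :=
  f ∈ S ∧ f' ∈ S ∧ f < f' ∧ ∀ g ∈ S, ¬(f < g ∧ g < f')

/-- The left halfsequence `F^{≤1/2}(B(2m),m)`. -/
def FareyBLeft (m : ℕ) : Set ℚ := {q ∈ FareyB (2 * m) m | q ≤ 1 / 2}

/-- On a fraction `q = h/k` in lowest terms, the map `h/k ↦ (k-2h)/(k-h)`. -/
def phi (q : ℚ) : ℚ := ((q.den : ℚ) - 2 * (q.num : ℚ)) / ((q.den : ℚ) - (q.num : ℚ))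

/-- On a fraction `q = h/k` in lowest terms, the map `h/k ↦ (k-h)/(2k-h)`. -/
def psi (q : ℚ) : ℚ := ((q.den : ℚ) - (q.num : ℚ)) / (2 * (q.den : ℚ) - (q.num : ℚ))

section aux

lemma num_cast_eq (q : ℚ) : (q.num : ℚ) = q * q.den := by
  have hk : (q.den : ℚ) ≠ 0 := by exact_mod_cast q.den_ne_zero
  have h := Rat.num_div_den q
  rw [div_eq_iff hk] at h
  rw [h]

/-- `phi q` as a rational-function of `q`. -/
lemma phi_eq (q : ℚ) : phi q = (1 - 2 * q) / (1 - q) := by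
  have hk : (q.den : ℚ) ≠ 0 := by exact_mod_cast q.den_ne_zero
  rw [phi, num_cast_eq]
  rw [show (q.den : ℚ) - 2 * (q * q.den) = (q.den : ℚ) * (1 - 2 * q) by ring,
      show (q.den : ℚ) - q * q.den = (q.den : ℚ) * (1 - q) by ring,
      mul_div_mul_left _ _ hk]

/-- `psi q` as a rational-function of `q`. -/
lemma psi_eq (q : ℚ) : psi q = (1 - q) / (2 - q) := by
  have hk : (q.den : ℚ) ≠ 0 := by exact_mod_cast q.den_ne_zero
  rw [psi, num_cast_eq]
  rw [show (q.den : ℚ) - q * q.den = (q.den : ℚ) * (1 - q) by ring,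
      show 2 * (q.den : ℚ) - q * q.den = (q.den : ℚ) * (2 - q) by ring,
      mul_div_mul_left _ _ hk]

lemma num_den_of_coprime {a b : ℤ} (hb : 0 < b) (h : IsCoprime a b) :
    ((a : ℚ) / (b : ℚ)).num = a ∧ (((a : ℚ) / (b : ℚ)).den : ℤ) = b := by
  have hc : Nat.Coprime a.natAbs b.natAbs := by
    rw [Int.isCoprime_iff_gcd_eq_one] at h
    exact h
  exact ⟨Rat.num_div_eq_of_coprime hb hc, Rat.den_div_eq_of_coprime hb hc⟩

lemma le_one_iff {q : ℚ} : q ≤ 1 ↔ q.num ≤ (q.den : ℤ) := by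
  have hpos : (0:ℚ) < (q.den : ℚ) := by exact_mod_cast q.pos
  constructor
  · intro h
    rw [← Rat.num_div_den q, div_le_one hpos] at h
    exact_mod_cast h
  · intro h
    rw [← Rat.num_div_den q, div_le_one hpos]
    exact_mod_cast h

lemma le_half_iff {q : ℚ} : q ≤ 1 / 2 ↔ 2 * q.num ≤ (q.den : ℤ) := by
  have hpos : (0:ℚ) < (q.den : ℚ) := by exact_mod_cast q.pos
  constructor
  · intro h
    rw [← Rat.num_div_den q, div_le_div_iff₀ hpos (by norm_num)] at h
    have h2 : ((2 * q.num : ℤ) : ℚ) ≤ ((q.den : ℤ) : ℚ) := by push_cast; linarith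
    exact_mod_cast h2
  · intro h
    rw [← Rat.num_div_den q, div_le_div_iff₀ hpos (by norm_num)]
    have h2 : ((2 * q.num : ℤ) : ℚ) ≤ ((q.den : ℤ) : ℚ) := by exact_mod_cast h
    push_cast at h2 ⊢
    linarith

/-- num and den of `phi q` for `q` with `q ≤ 1/2`. -/
lemma phi_num_den {q : ℚ} (hq2 : q ≤ 1 / 2) :
    (phi q).num = (q.den : ℤ) - 2 * q.num ∧ ((phi q).den : ℤ) = (q.den : ℤ) - q.num := by
  have h2hk : 2 * q.num ≤ (q.den : ℤ) := le_half_iff.mp hq2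
  have hkpos : (0:ℤ) < (q.den : ℤ) := by exact_mod_cast q.pos
  have hbpos : (0:ℤ) < (q.den : ℤ) - q.num := by
    rcases le_or_gt 0 q.num with hh | hh
    · linarith
    · linarith
  have hcop : IsCoprime ((q.den : ℤ) - 2 * q.num) ((q.den : ℤ) - q.num) := by
    obtain ⟨u, v, huv⟩ := (Int.isCoprime_iff_gcd_eq_one.mpr q.reduced :
      IsCoprime q.num (q.den : ℤ))
    exact ⟨-(u + v), u + 2 * v, by linear_combination huv⟩
  have key := num_den_of_coprime hbpos hcop
  have heq : phi q = (((q.den : ℤ) - 2 * q.num : ℤ) : ℚ) / (((q.den : ℤ) - q.num : ℤ) : ℚ) := by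
    rw [phi]; push_cast; ring_nf
  rw [heq]
  exact key

/-- num and den of `psi q` for `q` with `q ≤ 1`. -/
lemma psi_num_den {q : ℚ} (hq1 : q ≤ 1) :
    (psi q).num = (q.den : ℤ) - q.num ∧ ((psi q).den : ℤ) = 2 * (q.den : ℤ) - q.num := by
  have hhk : q.num ≤ (q.den : ℤ) := le_one_iff.mp hq1
  have hkpos : (0:ℤ) < (q.den : ℤ) := by exact_mod_cast q.pos
  have hbpos : (0:ℤ) < 2 * (q.den : ℤ) - q.num := by linarith
  have hcop : IsCoprime ((q.den : ℤ) - q.num) (2 * (q.den : ℤ) - q.num) := by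
    obtain ⟨u, v, huv⟩ := (Int.isCoprime_iff_gcd_eq_one.mpr q.reduced :
      IsCoprime q.num (q.den : ℤ))
    exact ⟨-(2 * u + v), u + v, by linear_combination huv⟩
  have key := num_den_of_coprime hbpos hcop
  have heq : psi q = (((q.den : ℤ) - q.num : ℤ) : ℚ) / ((2 * (q.den : ℤ) - q.num : ℤ) : ℚ) := by
    rw [psi]; push_cast; ring_nf
  rw [heq]
  exact key

end aux

/-- For `m > 1`, the map `h/k ↦ (k-2h)/(k-h)` is an order-reversing bijection from
`F^{≤1/2}(B(2m),m)` onto `F_m`, with order-reversing inverse `h/k ↦ (k-h)/(2k-h)`. -/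
theorem stmt_4 (m : ℕ) (hm : 1 < m) :
    (∀ q ∈ FareyBLeft m, phi q ∈ Farey m) ∧
    (∀ q ∈ Farey m, psi q ∈ FareyBLeft m) ∧
    (∀ q ∈ FareyBLeft m, psi (phi q) = q) ∧
    (∀ q ∈ Farey m, phi (psi q) = q) ∧
    (∀ q ∈ FareyBLeft m, ∀ q' ∈ FareyBLeft m, q < q' → phi q' < phi q) ∧
    (∀ q ∈ Farey m, ∀ q' ∈ Farey m, q < q' → psi q' < psi q) := by
  have key1 : ∀ q ∈ FareyBLeft m, phi q ∈ Farey m := by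
    rintro q ⟨⟨hq0, hq1, hden, hnum, hsub⟩, hhalf⟩
    obtain ⟨hn, hd⟩ := phi_num_den hhalf
    have h2hk : 2 * q.num ≤ (q.den : ℤ) := le_half_iff.mp hhalf
    have hnum0 : 0 ≤ q.num := Rat.num_nonneg.mpr hq0
    have hdenpos : (0:ℤ) < q.den := by exact_mod_cast q.pos
    refine ⟨?_, ?_, ?_⟩
    · rw [← Rat.num_nonneg, hn]; linarith
    · rw [le_one_iff, hn, hd]; linarith
    · have : ((phi q).den : ℤ) ≤ (m : ℤ) := by rw [hd]; push_cast at hsub ⊢; linarith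
      exact_mod_cast this
  have key2 : ∀ q ∈ Farey m, psi q ∈ FareyBLeft m := by
    rintro q ⟨hq0, hq1, hden⟩
    obtain ⟨hn, hd⟩ := psi_num_den hq1
    have hnum0 : 0 ≤ q.num := Rat.num_nonneg.mpr hq0
    have hhk : q.num ≤ (q.den : ℤ) := le_one_iff.mp hq1
    have hdenpos : (0:ℤ) < q.den := by exact_mod_cast q.pos
    have hdm : (q.den : ℤ) ≤ (m : ℤ) := by exact_mod_cast hden
    refine ⟨⟨?_, ?_, ?_, ?_, ?_⟩, ?_⟩
    · rw [← Rat.num_nonneg, hn]; linarith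
    · rw [le_one_iff, hn, hd]; linarith
    · have : ((psi q).den : ℤ) ≤ ((2 * m : ℕ) : ℤ) := by rw [hd]; push_cast; linarith
      exact_mod_cast this
    · rw [hn]; linarith
    · rw [hn, hd]; push_cast; linarith
    · rw [le_half_iff, hn, hd]; linarith
  refine ⟨key1, key2, ?_, ?_, ?_, ?_⟩
  · rintro q hq
    obtain ⟨⟨hq0, hq1, _, _, _⟩, hhalf⟩ := hq
    obtain ⟨hn, hd⟩ := phi_num_den hhalf
    have hn' : ((phi q).num : ℚ) = (q.den : ℚ) - 2 * (q.num : ℚ) := by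
      rw [hn]; push_cast; ring
    have hd' : ((phi q).den : ℚ) = (q.den : ℚ) - (q.num : ℚ) := by
      rw [show ((phi q).den : ℚ) = (((phi q).den : ℤ) : ℚ) by push_cast; ring, hd]
      push_cast; ring
    rw [psi, hn', hd']
    rw [show (q.den : ℚ) - (q.num : ℚ) - ((q.den : ℚ) - 2 * (q.num : ℚ)) = (q.num : ℚ) by ring,
      show 2 * ((q.den : ℚ) - (q.num : ℚ)) - ((q.den : ℚ) - 2 * (q.num : ℚ)) = (q.den : ℚ) by ring]
    exact Rat.num_div_den q
  · rintro q ⟨hq0, hq1, _⟩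
    obtain ⟨hn, hd⟩ := psi_num_den hq1
    have hn' : ((psi q).num : ℚ) = (q.den : ℚ) - (q.num : ℚ) := by
      rw [hn]; push_cast; ring
    have hd' : ((psi q).den : ℚ) = 2 * (q.den : ℚ) - (q.num : ℚ) := by
      rw [show ((psi q).den : ℚ) = (((psi q).den : ℤ) : ℚ) by push_cast; ring, hd]
      push_cast; ring
    rw [phi, hn', hd']
    rw [show 2 * (q.den : ℚ) - (q.num : ℚ) - 2 * ((q.den : ℚ) - (q.num : ℚ)) = (q.num : ℚ) by ring,
      show 2 * (q.den : ℚ) - (q.num : ℚ) - ((q.den : ℚ) - (q.num : ℚ)) = (q.den : ℚ) by ring]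
    exact Rat.num_div_den q
  · rintro q ⟨⟨hq0, hq1, _, _, _⟩, hh⟩ q' ⟨⟨hq0', hq1', _, _, _⟩, hh'⟩ hlt
    rw [phi_eq, phi_eq]
    have h1 : (0:ℚ) < 1 - q := by linarith [le_trans hh (by norm_num : (1:ℚ)/2 ≤ 1), hh]
    have h1' : (0:ℚ) < 1 - q' := by linarith [hh']
    rw [div_lt_div_iff₀ h1' h1]
    nlinarith
  · rintro q ⟨hq0, hq1, _⟩ q' ⟨hq0', hq1', _⟩ hlt
    rw [psi_eq, psi_eq]
    have h2 : (0:ℚ) < 2 - q := by linarith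
    have h2' : (0:ℚ) < 2 - q' := by linarith
    rw [div_lt_div_iff₀ h2' h2]
    nlinarith
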